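/- arXiv:1907.10187 — 2 statements merged into one kernel-verified Lean document; each statement's English description precedes it below -/
import Mathlib

section
/- For ν > 0, α ∈ ℝ, τ ∈ ℝ, the integral ∫₀^∞ y^ν φ(y) Φ(α y + τ) dy equals 2^{(ν-2)/2} π^{-1/2} Γ((ν+1)/2) Ψ(α √(ν+1); -τ, ν+1), where φ is the standard normal density, Φ is the standard normal cdf, and Ψ(x; κ, m) denotes the cdf at x of a noncentral Student-t distribution with noncentrality parameter κ and m degrees of freedom. -/
open MeasureTheory ProbabilityTheory Real Set

/-- Standard normal density. -/
noncomputable def stdNormalPDF (y : ℝ) : ℝ := (Real.sqrt (2 * Real.pi))⁻¹ * Real.exp (-y ^ 2 / 2)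

/-- Standard normal cdf. -/
noncomputable def stdNormalCDF (x : ℝ) : ℝ := ∫ y in Set.Iic x, stdNormalPDF y

/-- Noncentral Student-t cdf with noncentrality `κ` and `m` degrees of freedom:
the cdf of `(Z + κ)/√(W/m)` for independent `Z ~ N(0,1)` and `W ~ χ²_m`. -/
noncomputable def noncentralTCDF (x κ m : ℝ) : ℝ :=
  (((gaussianReal 0 1).prod (gammaMeasure (m / 2) (1 / 2)))
    {p : ℝ × ℝ | (p.1 + κ) / Real.sqrt (p.2 / m) ≤ x}).toReal

/-!
Conditioning on `W ~ χ²_m = Gamma(m/2, 1/2)` gives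
`Ψ(α√m; -τ, m) = P(Z ≤ α√W + τ) = E Φ(α√W + τ)`. Substituting `W = y²` turns this gamma
integral into `∫₀^∞ y^(m-1) e^(-y²/2) Φ(αy + τ) dy`, which for `m = ν + 1` is the left-hand side
up to the normalising constants.
-/

lemma gaussianReal_real_Iic (t : ℝ) : (gaussianReal 0 1).real (Iic t) = stdNormalCDF t := by
  have hpdf : stdNormalPDF = gaussianPDFReal 0 1 := by
    funext x
    simp [stdNormalPDF, gaussianPDFReal]
  rw [measureReal_def, gaussianReal_apply_eq_integral 0 one_ne_zero, ENNReal.toReal_ofReal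
    (setIntegral_nonneg measurableSet_Iic fun y _ => gaussianPDFReal_nonneg 0 1 y),
    stdNormalCDF, hpdf]

lemma measureReal_prod_apply_symm {α β : Type*} [MeasurableSpace α] [MeasurableSpace β]
    (μ : Measure α) (ν : Measure β) [IsFiniteMeasure μ] [SFinite ν] {s : Set (α × β)}
    (hs : MeasurableSet s) :
    (μ.prod ν).real s = ∫ y, μ.real ((fun x => (x, y)) ⁻¹' s) ∂ν := by
  simp only [measureReal_def]
  rw [integral_toReal (measurable_measure_prodMk_right hs).aemeasurable
    (ae_of_all _ fun _ => measure_lt_top _ _), Measure.prod_apply_symm hs]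

lemma integral_gammaMeasure {a r : ℝ} (ha : 0 < a) (hr : 0 < r) (g : ℝ → ℝ) :
    ∫ w, g w ∂gammaMeasure a r = ∫ w in Ioi 0, gammaPDFReal a r w * g w := by
  rw [gammaMeasure, integral_withDensity_eq_integral_toReal_smul
    (f := gammaPDF a r) (measurable_gammaPDFReal a r).ennreal_ofReal
    (ae_of_all _ fun _ => ENNReal.ofReal_lt_top),
    ← integral_Ici_eq_integral_Ioi, setIntegral_eq_integral_of_forall_compl_eq_zero]
  · simp only [gammaPDF, ENNReal.toReal_ofReal (gammaPDFReal_nonneg ha hr _), smul_eq_mul]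
  · intro w hw
    rw [mem_Ici, not_le] at hw
    simp [gammaPDFReal, not_le.mpr hw]

lemma noncentralTCDF_eq_integral (x κ : ℝ) {m : ℝ} (hm : 0 < m) :
    noncentralTCDF x κ m
      = ∫ w in Ioi 0, gammaPDFReal (m / 2) (1 / 2) w * stdNormalCDF (x * √(w / m) - κ) := by
  have hS : MeasurableSet {p : ℝ × ℝ | (p.1 + κ) / √(p.2 / m) ≤ x} :=
    measurableSet_le (by fun_prop) measurable_const
  have hslice : ∀ w > 0, {z : ℝ | (z + κ) / √(w / m) ≤ x} = Iic (x * √(w / m) - κ) := by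
    intro w hw
    ext z
    rw [mem_ofPred_eq, mem_Iic, div_le_iff₀ (by positivity), le_sub_iff_add_le]
  have := isProbabilityMeasure_gammaMeasure (half_pos hm) one_half_pos
  rw [noncentralTCDF, ← measureReal_def, measureReal_prod_apply_symm _ _ hS,
    integral_gammaMeasure (by positivity) one_half_pos]
  refine setIntegral_congr_fun measurableSet_Ioi fun w hw => ?_
  rw [preimage_ofPred_eq, hslice w hw, gaussianReal_real_Iic]

lemma noncentralTCDF_mul_sqrt_neg (α τ : ℝ) {m : ℝ} (hm : 0 < m) :
    noncentralTCDF (α * √m) (-τ) m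
      = ∫ w in Ioi 0, gammaPDFReal (m / 2) (1 / 2) w * stdNormalCDF (α * √w + τ) := by
  simp_rw [noncentralTCDF_eq_integral _ _ hm, mul_assoc, ← sqrt_mul hm.le,
    mul_div_cancel₀ _ hm.ne', sub_neg_eq_add]

lemma integral_gammaPDFReal_mul_comp_sqrt (a r : ℝ) (g : ℝ → ℝ) :
    ∫ w in Ioi 0, gammaPDFReal a r w * g √w
      = 2 * r ^ a / Gamma a * ∫ y in Ioi 0, y ^ (2 * a - 1) * exp (-(r * y ^ 2)) * g y := by
  rw [← integral_comp_rpow_Ioi_of_pos two_pos, ← integral_const_mul]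
  refine setIntegral_congr_fun measurableSet_Ioi fun y (hy : 0 < y) => ?_
  have hy2 : y ^ (2 : ℝ) = y ^ 2 := rpow_two y
  rw [smul_eq_mul, gammaPDFReal, if_pos (by positivity), hy2, sqrt_sq hy.le, ← rpow_two,
    ← rpow_mul hy.le, show (2 : ℝ) - 1 = 1 by norm_num, rpow_one,
    show 2 * a - 1 = 1 + 2 * (a - 1) by ring, rpow_add hy, rpow_one, hy2]
  ring

lemma skewNormal_normalizing_constant {ν : ℝ} (hν : -1 < ν) :
    2 ^ ((ν - 2) / 2) * π ^ (-(1 : ℝ) / 2) * Gamma ((ν + 1) / 2)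
      * (2 * (1 / 2) ^ ((ν + 1) / 2) / Gamma ((ν + 1) / 2)) = (√(2 * π))⁻¹ := by
  have hΓ : Gamma ((ν + 1) / 2) ≠ 0 := (Gamma_pos_of_pos (by linarith)).ne'
  have h2 : (2 : ℝ) ^ ((ν - 2) / 2) * (2 * (1 / 2) ^ ((ν + 1) / 2)) = 2 ^ (-(1 : ℝ) / 2) :=
    calc _ = (2 : ℝ) ^ ((ν - 2) / 2) * 2 ^ (1 : ℝ) * 2 ^ (-((ν + 1) / 2)) := by
          rw [rpow_one, one_div, inv_rpow two_pos.le, ← rpow_neg two_pos.le]; ring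
      _ = _ := by rw [← rpow_add two_pos, ← rpow_add two_pos]; ring_nf
  rw [sqrt_eq_rpow, ← rpow_neg (by positivity), mul_rpow two_pos.le pi_pos.le,
    show -(1 / 2 : ℝ) = -1 / 2 by ring, ← h2]
  field_simp

theorem skewNormal_moment_integral (ν α τ : ℝ) (hν : 0 < ν) :
    ∫ y in Set.Ioi (0 : ℝ), y ^ ν * stdNormalPDF y * stdNormalCDF (α * y + τ)
      = 2 ^ ((ν - 2) / 2) * Real.pi ^ (-(1 : ℝ) / 2) * Real.Gamma ((ν + 1) / 2) *
        noncentralTCDF (α * Real.sqrt (ν + 1)) (-τ) (ν + 1) := by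
  rw [noncentralTCDF_mul_sqrt_neg α τ (by linarith),
    integral_gammaPDFReal_mul_comp_sqrt _ _ fun y => stdNormalCDF (α * y + τ),
    show 2 * ((ν + 1) / 2) - 1 = ν by ring, ← mul_assoc,
    skewNormal_normalizing_constant (by linarith), ← integral_const_mul]
  refine setIntegral_congr_fun measurableSet_Ioi fun y _ => ?_
  rw [stdNormalPDF]
  ring_nf
end

section
/- Let Z ~ N(0,1) and W ~ χ²_m be independent, and let T = (Z + κ)/√(W/m) be noncentral t with m degrees of freedom. Then for any constants a, τ ∈ ℝ, ∫₀^∞ u^{m-1} φ(u) Φ(a u + τ) du = 2^{(m-3)/2} π^{-1/2} Γ(m/2) Ψ(a√m; −τ, m); equivalently, E[U^{m-1} Φ(aU + τ) 1_{U>0}] for U ~ N(0,1) equals 2^{(m-3)/2} π^{-1/2} Γ(m/2) Ψ(a√m; −τ, m). -/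
open MeasureTheory ProbabilityTheory Real Set

lemma stdNormalPDF_eq : stdNormalPDF = gaussianPDFReal 0 1 := by
  funext x
  simp [stdNormalPDF, gaussianPDFReal, neg_div]

lemma stdNormalPDF_nonneg (x : ℝ) : 0 ≤ stdNormalPDF x := by
  rw [stdNormalPDF_eq]; exact gaussianPDFReal_nonneg 0 1 x

lemma stdNormalCDF_nonneg (x : ℝ) : 0 ≤ stdNormalCDF x :=
  integral_nonneg fun y => stdNormalPDF_nonneg y

lemma stdNormalCDF_mono : Monotone stdNormalCDF := by
  intro c d hcd
  apply setIntegral_mono_set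
  · rw [stdNormalPDF_eq]; exact (integrable_gaussianPDFReal 0 1).restrict
  · exact ae_of_all _ fun y => stdNormalPDF_nonneg y
  · exact ae_of_all _ (Iic_subset_Iic.mpr hcd)

lemma stdNormalCDF_measurable : Measurable stdNormalCDF :=
  stdNormalCDF_mono.measurable

lemma gaussianReal_Iic (c : ℝ) :
    gaussianReal 0 1 (Set.Iic c) = ENNReal.ofReal (stdNormalCDF c) := by
  rw [gaussianReal_apply_eq_integral 0 one_ne_zero, stdNormalCDF, stdNormalPDF_eq]

lemma prod_measure_key (m a τ : ℝ) (hm : 0 < m) :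
    ((gaussianReal 0 1).prod (gammaMeasure (m / 2) (1 / 2)))
      {p : ℝ × ℝ | (p.1 + -τ) / Real.sqrt (p.2 / m) ≤ a * Real.sqrt m}
    = ∫⁻ w in Set.Ioi 0, ENNReal.ofReal
        (gammaPDFReal (m/2) (1/2) w * stdNormalCDF (a * Real.sqrt w + τ)) := by
  have hm2 : (0:ℝ) < m / 2 := by linarith
  set S : Set (ℝ × ℝ) := {p : ℝ × ℝ | (p.1 + -τ) / Real.sqrt (p.2 / m) ≤ a * Real.sqrt m}
    with hSdef
  have : IsProbabilityMeasure (gammaMeasure (m/2) (1/2)) :=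
    isProbabilityMeasure_gammaMeasure hm2 one_half_pos
  have hgm : Measurable (gammaPDF (m/2) (1/2)) := (measurable_gammaPDFReal _ _).ennreal_ofReal
  have hS : MeasurableSet S := by
    apply measurableSet_le _ measurable_const
    exact (measurable_fst.add_const _).div ((measurable_snd.div_const m).sqrt)
  rw [Measure.prod_apply_symm hS, gammaMeasure,
    lintegral_withDensity_eq_lintegral_mul _ hgm
      (measurable_measure_prodMk_right hS),
    ← lintegral_indicator measurableSet_Ioi]
  apply lintegral_congr_ae
  have h0 : ∀ᵐ (w : ℝ), w ≠ 0 := by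
    refine ae_iff.mpr ?_
    simp only [not_not, setOf_eq_eq_singleton, measure_singleton]
  filter_upwards [h0] with w hw0
  rcases lt_or_gt_of_ne hw0 with hw | hw
  · simp only [Pi.mul_apply, gammaPDF_of_neg hw, zero_mul,
      Set.indicator_of_notMem (by simp [hw.le] : w ∉ Set.Ioi (0:ℝ))]
  · have hpre : (fun z => (z, w)) ⁻¹' S = Set.Iic (a * Real.sqrt w + τ) := by
      ext z
      have hs : 0 < Real.sqrt (w / m) := Real.sqrt_pos.mpr (div_pos hw hm)
      have hmul : a * Real.sqrt m * Real.sqrt (w / m) = a * Real.sqrt w := by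
        rw [mul_assoc, ← Real.sqrt_mul hm.le, mul_div_cancel₀ _ hm.ne']
      simp only [hSdef, Set.mem_preimage, Set.mem_setOf_eq, Set.mem_Iic,
        div_le_iff₀ hs, hmul]
      constructor <;> intro h <;> linarith
    rw [Set.indicator_of_mem (by simpa using hw : w ∈ Set.Ioi (0:ℝ))]
    simp only [Pi.mul_apply, hpre, gaussianReal_Iic, gammaPDF_of_nonneg hw.le]
    rw [← ENNReal.ofReal_mul (by positivity)]
    congr 1
    rw [gammaPDFReal, if_pos hw.le]

theorem truncated_moment_to_noncentral_t (m a τ : ℝ) (hm : 0 < m) :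
    ∫ u in Set.Ioi (0 : ℝ), u ^ (m - 1) * stdNormalPDF u * stdNormalCDF (a * u + τ)
      = 2 ^ ((m - 3) / 2) * Real.pi ^ (-(1 : ℝ) / 2) * Real.Gamma (m / 2) *
        noncentralTCDF (a * Real.sqrt m) (-τ) m := by
  have hm2 : (0:ℝ) < m / 2 := by linarith
  have hΓ : 0 < Real.Gamma (m/2) := Real.Gamma_pos_of_pos hm2
  rw [noncentralTCDF, prod_measure_key m a τ hm]
  have hA : ∫ w in Set.Ioi (0:ℝ),
        gammaPDFReal (m/2) (1/2) w * stdNormalCDF (a * Real.sqrt w + τ)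
      = (∫⁻ w in Set.Ioi (0:ℝ), ENNReal.ofReal
          (gammaPDFReal (m/2) (1/2) w * stdNormalCDF (a * Real.sqrt w + τ))).toReal := by
    refine integral_eq_lintegral_of_nonneg_ae (ae_of_all _ fun w => ?_) ?_
    · exact mul_nonneg (gammaPDFReal_nonneg hm2 one_half_pos w) (stdNormalCDF_nonneg _)
    · exact ((measurable_gammaPDFReal _ _).mul (stdNormalCDF_measurable.comp
        ((Real.continuous_sqrt.measurable.const_mul a).add_const τ))).aestronglyMeasurable.restrict
  rw [← hA,
    ← integral_comp_rpow_Ioi (fun w => gammaPDFReal (m/2) (1/2) w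
      * stdNormalCDF (a * Real.sqrt w + τ)) (two_ne_zero : (2:ℝ) ≠ 0),
    ← integral_const_mul]
  refine setIntegral_congr_fun measurableSet_Ioi fun u hu => ?_
  have hu0 : (0:ℝ) < u := hu
  have h1 : u ^ (2:ℝ) = u ^ 2 := Real.rpow_two u
  have hsq : Real.sqrt (u ^ (2:ℝ)) = u := by rw [h1]; exact Real.sqrt_sq hu0.le
  simp only [smul_eq_mul, hsq]
  rw [gammaPDFReal, if_pos (by positivity : (0:ℝ) ≤ u ^ (2:ℝ))]
  have h2 : (u ^ (2:ℝ)) ^ (m/2 - 1) = u ^ (m - 2) := by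
    rw [← Real.rpow_mul hu0.le]; congr 1; ring
  have h3 : Real.exp (-((1:ℝ)/2 * u ^ (2:ℝ))) = Real.exp (-u^2/2) := by
    rw [h1]; congr 1; ring
  have h4 : u ^ (m-1) = u^(m-2) * u := by
    rw [show m-1 = (m-2)+1 by ring, Real.rpow_add hu0, Real.rpow_one]
  have h5 : |(2:ℝ)| * u ^ ((2:ℝ)-1) = 2 * u := by
    norm_num
  have hconst : (Real.sqrt (2 * Real.pi))⁻¹
      = 2 ^ ((m - 3) / 2) * Real.pi ^ (-(1 : ℝ) / 2) * Real.Gamma (m / 2) *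
        (2 * (((1:ℝ)/2) ^ (m/2) / Real.Gamma (m/2))) := by
    have h1' : (Real.sqrt (2*Real.pi))⁻¹ = 2^(-(1:ℝ)/2) * Real.pi^(-(1:ℝ)/2) := by
      rw [Real.sqrt_eq_rpow, ← Real.rpow_neg (by positivity),
        Real.mul_rpow (by norm_num) Real.pi_pos.le]
      norm_num
    have h2' : ((1:ℝ)/2)^(m/2) = (2:ℝ)^(-(m/2)) := by
      rw [one_div, Real.inv_rpow (by norm_num), ← Real.rpow_neg (by norm_num)]
    have h3' : (2:ℝ)^((m-3)/2) * 2^(-(m/2)) * 2 = 2^(-(1:ℝ)/2) := by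
      rw [← Real.rpow_add two_pos, ← Real.rpow_add_one (two_ne_zero)]
      congr 1; ring
    rw [h1', h2', ← h3']
    field_simp
  rw [h2, h3, h5, stdNormalPDF, h4, hconst]
  ring
end
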